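/- Let x_1,…,x_n be positive integers with x_1+⋯+x_n = 2N, let Q(x) be the partition constraint graph P(x) together with an additional edge g = {U,W} of weight N, let C_1 be the configuration that orients g toward W, every edge {U,v_i} toward U, and every edge {W,v_i} toward v_i, and let C_2 be the configuration obtained from C_1 by reversing the orientation of every edge of Q(x). Then C_1 and C_2 are legal, and there exists a reconfiguration sequence from C_1 to C_2 in which each edge is reversed at most once, if and only if there exists a subset S ⊆ {1,…,n} with ∑_{i∈S} x_i = N. -/

import Mathlib

/-!
STATEMENT 3: Let x_1,…,x_n be positive integers with x_1+⋯+x_n = 2N, let Q(x)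
be the partition constraint graph P(x) together with an additional edge
g = {U,W} of weight N, let C_1 be the configuration that orients g toward W,
every edge {U,v_i} toward U, and every edge {W,v_i} toward v_i, and let C_2 be
the configuration obtained from C_1 by reversing the orientation of every edge
of Q(x). Then C_1 and C_2 are legal, and there exists a reconfiguration
sequence from C_1 to C_2 in which each edge is reversed at most once, if and
only if there exists a subset S ⊆ {1,…,n} with ∑_{i∈S} x_i = N.
-/

/-- A configuration of a constraint graph assigns to each edge one of its
two endpoints (its head). -/
def IsConf {V : Type} (G : SimpleGraph V) (C : Sym2 V → V) : Prop :=
  ∀ e ∈ G.edgeSet, C e ∈ e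

/-- A configuration is legal if every vertex receives inflow (total weight of
edges whose head is that vertex) at least its minimum inflow. -/
def Legal {V : Type} [Fintype V] [DecidableEq V] (G : SimpleGraph V)
    [DecidableRel G.Adj] (w : Sym2 V → ℕ) (μ : V → ℕ) (C : Sym2 V → V) : Prop :=
  ∀ v : V, μ v ≤ ∑ e ∈ G.edgeFinset, if C e = v then w e else 0

/-- Two configurations agree (as orientations of the edges of `G`). -/
def ConfEq {V : Type} (G : SimpleGraph V) (C C' : Sym2 V → V) : Prop :=
  ∀ e ∈ G.edgeSet, C e = C' e

/-- One reconfiguration step: exactly one edge changes its orientation. -/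
def Step {V : Type} (G : SimpleGraph V) (C C' : Sym2 V → V) : Prop :=
  ∃ e ∈ G.edgeSet, C e ≠ C' e ∧ ∀ f ∈ G.edgeSet, f ≠ e → C f = C' f

/-- A reconfiguration sequence: every configuration is a legal configuration
and each consecutive pair differs in the orientation of exactly one edge. -/
def IsReconfSeq {V : Type} [Fintype V] [DecidableEq V] (G : SimpleGraph V)
    [DecidableRel G.Adj] (w : Sym2 V → ℕ) (μ : V → ℕ) {m : ℕ}
    (Cs : Fin (m + 1) → Sym2 V → V) : Prop :=
  (∀ i, IsConf G (Cs i) ∧ Legal G w μ (Cs i)) ∧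
    ∀ i : Fin m, Step G (Cs i.castSucc) (Cs i.succ)

/-- In the sequence, each edge is reversed at most once. -/
def AtMostOnce {V : Type} (G : SimpleGraph V) {m : ℕ}
    (Cs : Fin (m + 1) → Sym2 V → V) : Prop :=
  ∀ e ∈ G.edgeSet, ∀ i j : Fin m,
    Cs i.castSucc e ≠ Cs i.succ e → Cs j.castSucc e ≠ Cs j.succ e → i = j

/-- Vertices of the partition constraint graph: `U`, `W` and `v i` for `i < n`. -/
inductive PVert (n : ℕ) : Type
  | U : PVert n
  | W : PVert n
  | v : Fin n → PVert n
deriving DecidableEq, Fintype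

/-- Adjacency of `Q(x)`: `U` and `W` are each joined to every `v i`, and
additionally `U` is joined to `W`. -/
def qadjB {n : ℕ} : PVert n → PVert n → Bool
  | .U, .v _ => true
  | .v _, .U => true
  | .W, .v _ => true
  | .v _, .W => true
  | .U, .W => true
  | .W, .U => true
  | _, _ => false

/-- The underlying graph of the constraint graph `Q(x)`. -/
def QGraph (n : ℕ) : SimpleGraph (PVert n) where
  Adj a b := qadjB a b
  symm := ⟨by intro a b h; cases a <;> cases b <;> simp_all [qadjB]⟩
  loopless := ⟨by intro a; cases a <;> simp [qadjB]⟩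

instance (n : ℕ) : DecidableRel (QGraph n).Adj :=
  fun a b => inferInstanceAs (Decidable (qadjB a b = true))

/-- Edge weights of `Q(x)` as a symmetric pair function: the edges `{U, v i}`
and `{W, v i}` both have weight `x i`, and the edge `g = {U,W}` has weight `N`. -/
def wPairQ {n : ℕ} (x : Fin n → ℕ) (N : ℕ) : PVert n → PVert n → ℕ
  | .U, .v i => x i
  | .v i, .U => x i
  | .W, .v i => x i
  | .v i, .W => x i
  | .U, .W => N
  | .W, .U => N
  | _, _ => 0

/-- Edge weights of `Q(x)`. -/
def wQ {n : ℕ} (x : Fin n → ℕ) (N : ℕ) : Sym2 (PVert n) → ℕ :=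
  Sym2.lift ⟨wPairQ x N, by intro a b; cases a <;> cases b <;> rfl⟩

/-- Minimum inflows: `μ(U) = μ(W) = N` and `μ(v i) = x i`. -/
def μQ {n : ℕ} (x : Fin n → ℕ) (N : ℕ) : PVert n → ℕ
  | .U => N
  | .W => N
  | .v i => x i

/-- The head function of the initial configuration `C₁`: `g = {U,W}` is
oriented toward `W`, each `{U, v i}` toward `U`, each `{W, v i}` toward `v i`. -/
def initHead {n : ℕ} : PVert n → PVert n → PVert n
  | .U, .v _ => .U
  | .v _, .U => .U
  | .W, .v i => .v i
  | .v i, .W => .v i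
  | .U, .W => .W
  | .W, .U => .W
  | _, _ => .U

/-- The initial configuration `C₁`. -/
def C1 {n : ℕ} : Sym2 (PVert n) → PVert n :=
  Sym2.lift ⟨initHead, by intro a b; cases a <;> cases b <;> rfl⟩

/-- The additional edge `g = {U, W}`. -/
def gEdge (n : ℕ) : Sym2 (PVert n) := s(PVert.U, PVert.W)

/-- The head function of the final configuration `C₂`, obtained from `C₁` by
reversing every edge: `g = {U,W}` is oriented toward `U`, each `{U, v i}`
toward `v i`, each `{W, v i}` toward `W`. -/
def finHead {n : ℕ} : PVert n → PVert n → PVert n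
  | .U, .v i => .v i
  | .v i, .U => .v i
  | .W, .v _ => .W
  | .v _, .W => .W
  | .U, .W => .U
  | .W, .U => .U
  | _, _ => .U

/-- The final configuration `C₂`. -/
def C2 {n : ℕ} : Sym2 (PVert n) → PVert n :=
  Sym2.lift ⟨finHead, by intro a b; cases a <;> cases b <;> rfl⟩

/-!
Reversing `g = {U, W}` moves weight `N` from `W` to `U`, so consider the configuration `D` just
before that step. Its total inflow equals the total weight `5N` and is at least `N` at `U`,
`N + N` at `W` (the edge `g`, plus the `N` that `W` still needs once `g` is gone) and `x i` at
each `v i`. Hence everything is tight: `U` receives exactly `N`, and the `i` with `{U, v i}`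
oriented toward `U` form the required `S`.

Conversely, given `S`, reverse `{U, v i}` and then `{W, v i}` for `i ∈ S`, then `g`, then
`{U, v i}` and `{W, v i}` for `i ∉ S`. Each `v i` always keeps an incoming edge, `U` keeps the
weight `N` of the complement of `S` until `g` arrives, and `W` has received the weight `N` of `S`
before `g` leaves.
-/

open Finset

theorem Fin.exists_not_castSucc_and_succ {m : ℕ} {p : Fin (m + 1) → Prop} (h₀ : ¬ p 0)
    (hm : p (Fin.last m)) : ∃ i : Fin m, ¬ p i.castSucc ∧ p i.succ := by
  obtain ⟨k, hk, hk₁, hp⟩ := Nat.exists_not_and_succ_of_not_zero_of_exists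
    (p := fun k => ∃ h : k < m + 1, p ⟨k, h⟩) (by simpa using h₀)
    ⟨m, Nat.lt_succ_self m, hm⟩
  exact ⟨⟨k, by omega⟩, fun h => hk ⟨_, h⟩, hp⟩

theorem List.idxOf_lt_idxOf_append {α : Type*} [BEq α] [LawfulBEq α] {a b : List α} {y z : α}
    (hy : y ∈ a) (hz : z ∉ a) : (a ++ b).idxOf y < (a ++ b).idxOf z := by
  rw [List.idxOf_append_of_mem hy, List.idxOf_append_of_notMem hz]
  have := List.idxOf_lt_length_of_mem hy
  omega

section Reconfiguration

variable {V : Type} [DecidableEq V]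

def inflow [Fintype V] (G : SimpleGraph V) [DecidableRel G.Adj] (w : Sym2 V → ℕ)
    (C : Sym2 V → V) (v : V) : ℕ :=
  ∑ e ∈ G.edgeFinset, if C e = v then w e else 0

theorem legal_iff_le_inflow [Fintype V] (G : SimpleGraph V) [DecidableRel G.Adj]
    (w : Sym2 V → ℕ) (μ : V → ℕ) (C : Sym2 V → V) :
    Legal G w μ C ↔ ∀ v, μ v ≤ inflow G w C v :=
  Iff.rfl

theorem sum_inflow [Fintype V] (G : SimpleGraph V) [DecidableRel G.Adj] (w : Sym2 V → ℕ)
    (C : Sym2 V → V) : ∑ v, inflow G w C v = ∑ e ∈ G.edgeFinset, w e := by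
  unfold inflow
  rw [Finset.sum_comm]
  simp

def reversePrefix (A B : Sym2 V → V) (L : List (Sym2 V)) (t : ℕ) (e : Sym2 V) : V :=
  if e ∈ L.take t then B e else A e

variable {A B : Sym2 V → V} {L : List (Sym2 V)} {e : Sym2 V}

theorem reversePrefix_of_mem (he : e ∈ L) (t : ℕ) :
    reversePrefix A B L t e = if L.idxOf e < t then B e else A e := by
  simp only [reversePrefix, List.mem_take_iff_idxOf_lt he]

theorem reversePrefix_ne_add_one_iff (hL : L.Nodup) (he : e ∈ L) (hAB : A e ≠ B e) {t : ℕ}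
    (ht : t < L.length) :
    reversePrefix A B L t e ≠ reversePrefix A B L (t + 1) e ↔ e = L[t] := by
  have hidx : e = L[t] ↔ L.idxOf e = t :=
    ⟨by rintro rfl; exact hL.idxOf_getElem t ht, by rintro rfl; exact (L.getElem_idxOf _).symm⟩
  rw [hidx, reversePrefix_of_mem he, reversePrefix_of_mem he]
  by_cases h₁ : L.idxOf e < t <;> by_cases h₂ : L.idxOf e < t + 1 <;>
    simp [h₁, h₂, hAB] <;> omega

theorem exists_reconfSeq_reversePrefix [Fintype V] (G : SimpleGraph V) [DecidableRel G.Adj]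
    (w : Sym2 V → ℕ) (μ : V → ℕ) (hL : L.Nodup) (hLG : ∀ e, e ∈ L ↔ e ∈ G.edgeSet)
    (hA : IsConf G A) (hB : IsConf G B) (hAB : ∀ e ∈ G.edgeSet, A e ≠ B e)
    (hlegal : ∀ t, Legal G w μ (reversePrefix A B L t)) :
    ∃ (m : ℕ) (Cs : Fin (m + 1) → Sym2 V → V), ConfEq G (Cs 0) A ∧
      ConfEq G (Cs (Fin.last m)) B ∧ IsReconfSeq G w μ Cs ∧ AtMostOnce G Cs := by
  have hflip {t : Fin L.length} {e : Sym2 V} (he : e ∈ G.edgeSet) :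
      reversePrefix A B L t.castSucc e ≠ reversePrefix A B L t.succ e ↔ e = L[t] :=
    reversePrefix_ne_add_one_iff hL ((hLG e).2 he) (hAB e he) t.isLt
  refine ⟨L.length, fun t => reversePrefix A B L t, fun e _ => by simp [reversePrefix],
    fun e he => by simp [reversePrefix, (hLG e).2 he],
    ⟨fun t => ⟨?_, hlegal t⟩, fun t => ?_⟩, ?_⟩
  · intro e he
    show (if e ∈ L.take t then B e else A e) ∈ e
    split_ifs
    exacts [hB e he, hA e he]
  · have hmem : L[t] ∈ G.edgeSet := (hLG _).1 (L.getElem_mem t.isLt)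
    exact ⟨L[t], hmem, (hflip hmem).2 rfl, fun f hf hne => not_not.1 (mt (hflip hf).1 hne)⟩
  · intro e he i j hi hj
    rw [hflip he] at hi hj
    exact Fin.ext (hL.getElem_inj_iff.1 (hi.symm.trans hj))

end Reconfiguration

section PartitionGraph

variable {n : ℕ}

def uEdge (i : Fin n) : Sym2 (PVert n) := s(PVert.U, PVert.v i)

def wEdge (i : Fin n) : Sym2 (PVert n) := s(PVert.W, PVert.v i)

theorem uEdge_injective : Function.Injective (uEdge (n := n)) :=
  fun i j h => by simpa [uEdge] using h

theorem wEdge_injective : Function.Injective (wEdge (n := n)) :=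
  fun i j h => by simpa [wEdge] using h

theorem edgeFinset_QGraph :
    (QGraph n).edgeFinset = insert (gEdge n) (univ.image uEdge ∪ univ.image wEdge) := by
  ext e
  induction e using Sym2.ind with
  | _ a b =>
    simp only [SimpleGraph.mem_edgeFinset, SimpleGraph.mem_edgeSet, mem_insert, mem_union,
      mem_image, mem_univ, true_and, gEdge, uEdge, wEdge]
    cases a <;> cases b <;> simp [QGraph, qadjB]

theorem mem_edgeSet_QGraph {e : Sym2 (PVert n)} :
    e ∈ (QGraph n).edgeSet ↔ e = gEdge n ∨ (∃ i, uEdge i = e) ∨ ∃ i, wEdge i = e := by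
  simp [← SimpleGraph.mem_edgeFinset, edgeFinset_QGraph]

theorem gEdge_mem_edgeSet : gEdge n ∈ (QGraph n).edgeSet := mem_edgeSet_QGraph.2 (.inl rfl)

theorem uEdge_mem_edgeSet (i : Fin n) : uEdge i ∈ (QGraph n).edgeSet :=
  mem_edgeSet_QGraph.2 (.inr (.inl ⟨i, rfl⟩))

theorem wEdge_mem_edgeSet (i : Fin n) : wEdge i ∈ (QGraph n).edgeSet :=
  mem_edgeSet_QGraph.2 (.inr (.inr ⟨i, rfl⟩))

theorem uEdge_ne_gEdge (i : Fin n) : uEdge i ≠ gEdge n := by simp [uEdge, gEdge]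

theorem wEdge_ne_gEdge (i : Fin n) : wEdge i ≠ gEdge n := by simp [wEdge, gEdge]

theorem sum_edgeFinset_QGraph {M : Type*} [AddCommMonoid M] (f : Sym2 (PVert n) → M) :
    ∑ e ∈ (QGraph n).edgeFinset, f e =
      f (gEdge n) + (∑ i, f (uEdge i) + ∑ i, f (wEdge i)) := by
  rw [edgeFinset_QGraph, sum_insert, sum_union, sum_image (uEdge_injective.injOn),
    sum_image (wEdge_injective.injOn)]
  all_goals simp [disjoint_left, gEdge, uEdge, wEdge]

theorem sum_univ_PVert {M : Type*} [AddCommMonoid M] (f : PVert n → M) :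
    ∑ v, f v = f .U + f .W + ∑ i, f (.v i) := by
  have huniv : (univ : Finset (PVert n)) = insert .U (insert .W (univ.image PVert.v)) := by
    ext a; cases a <;> simp
  rw [huniv, sum_insert (by simp), sum_insert (by simp),
    sum_image (fun _ _ _ _ h => PVert.v.inj h), add_assoc]

@[simp] theorem C1_gEdge : C1 (gEdge n) = .W := rfl
@[simp] theorem C1_uEdge (i : Fin n) : C1 (uEdge i) = .U := rfl
@[simp] theorem C1_wEdge (i : Fin n) : C1 (wEdge i) = .v i := rfl
@[simp] theorem C2_gEdge : C2 (gEdge n) = .U := rfl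
@[simp] theorem C2_uEdge (i : Fin n) : C2 (uEdge i) = .v i := rfl
@[simp] theorem C2_wEdge (i : Fin n) : C2 (wEdge i) = .W := rfl

theorem isConf_C1 : IsConf (QGraph n) C1 := by
  intro e he
  rcases mem_edgeSet_QGraph.1 he with rfl | ⟨i, rfl⟩ | ⟨i, rfl⟩ <;>
    simp [C1, initHead, gEdge, uEdge, wEdge]

theorem isConf_C2 : IsConf (QGraph n) C2 := by
  intro e he
  rcases mem_edgeSet_QGraph.1 he with rfl | ⟨i, rfl⟩ | ⟨i, rfl⟩ <;>
    simp [C2, finHead, gEdge, uEdge, wEdge]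

theorem C1_ne_C2 {e : Sym2 (PVert n)} (he : e ∈ (QGraph n).edgeSet) : C1 e ≠ C2 e := by
  rcases mem_edgeSet_QGraph.1 he with rfl | ⟨i, rfl⟩ | ⟨i, rfl⟩ <;> simp

theorem IsConf.gEdge_eq {C : Sym2 (PVert n) → PVert n} (hC : IsConf (QGraph n) C) :
    C (gEdge n) = .U ∨ C (gEdge n) = .W := by
  simpa [gEdge] using hC _ gEdge_mem_edgeSet

theorem IsConf.wEdge_eq {C : Sym2 (PVert n) → PVert n} (hC : IsConf (QGraph n) C)
    (i : Fin n) : C (wEdge i) = .W ∨ C (wEdge i) = .v i := by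
  simpa [wEdge] using hC _ (wEdge_mem_edgeSet i)

variable (x : Fin n → ℕ) (N : ℕ)

theorem inflow_QGraph (C : Sym2 (PVert n) → PVert n) (u : PVert n) :
    inflow (QGraph n) (wQ x N) C u = (if C (gEdge n) = u then N else 0) +
      ((∑ i, if C (uEdge i) = u then x i else 0) + ∑ i, if C (wEdge i) = u then x i else 0) :=
  sum_edgeFinset_QGraph _

theorem sum_wQ : ∑ e ∈ (QGraph n).edgeFinset, wQ x N e = N + (∑ i, x i + ∑ i, x i) :=
  sum_edgeFinset_QGraph _

theorem legal_QGraph_of {C : Sym2 (PVert n) → PVert n}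
    (hv : ∀ i, C (uEdge i) = .v i ∨ C (wEdge i) = .v i)
    (hU : C (gEdge n) = .U ∨ N ≤ ∑ i with C (uEdge i) = .U, x i)
    (hW : C (gEdge n) = .W ∨ N ≤ ∑ i with C (wEdge i) = .W, x i) :
    Legal (QGraph n) (wQ x N) (μQ x N) C := by
  rw [legal_iff_le_inflow]
  intro u
  rw [inflow_QGraph]
  cases u with
  | U =>
    rcases hU with h | h
    · simp [h, μQ]
    · rw [sum_filter] at h
      simp only [μQ]
      omega
  | W =>
    rcases hW with h | h
    · simp [h, μQ]
    · rw [sum_filter] at h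
      simp only [μQ]
      omega
  | v k =>
    have hle {f : Fin n → PVert n} (hk : f k = .v k) :
        x k ≤ ∑ i, if f i = .v k then x i else 0 := by
      simpa [hk] using single_le_sum (f := fun i => if f i = .v k then x i else 0)
        (fun _ _ => Nat.zero_le _) (mem_univ k)
    simp only [μQ]
    rcases hv k with h | h
    · have := hle (f := fun i => C (uEdge i)) h
      omega
    · have := hle (f := fun i => C (wEdge i)) h
      omega

theorem legal_C1 (hsum : ∑ i, x i = 2 * N) : Legal (QGraph n) (wQ x N) (μQ x N) C1 :=
  legal_QGraph_of x N (fun _ => .inr rfl) (.inr (by simp [hsum]; omega)) (.inl rfl)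

theorem legal_C2 (hsum : ∑ i, x i = 2 * N) : Legal (QGraph n) (wQ x N) (μQ x N) C2 :=
  legal_QGraph_of x N (fun _ => .inl rfl) (.inl rfl) (.inr (by simp [hsum]; omega))

theorem exists_sum_eq_of_reverse_gEdge (hsum : ∑ i, x i = 2 * N)
    {D D' : Sym2 (PVert n) → PVert n} (hD : IsConf (QGraph n) D)
    (hDlegal : Legal (QGraph n) (wQ x N) (μQ x N) D)
    (hD'legal : Legal (QGraph n) (wQ x N) (μQ x N) D')
    (hDg : D (gEdge n) = .W) (hD'g : D' (gEdge n) = .U)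
    (hDD' : ∀ e ∈ (QGraph n).edgeSet, e ≠ gEdge n → D e = D' e) :
    ∃ S : Finset (Fin n), ∑ i ∈ S, x i = N := by
  rw [legal_iff_le_inflow] at hDlegal hD'legal
  have hU : inflow (QGraph n) (wQ x N) D .U = ∑ i with D (uEdge i) = .U, x i := by
    have hwU (i : Fin n) : D (wEdge i) ≠ .U := by rcases hD.wEdge_eq i with h | h <;> simp [h]
    simp [inflow_QGraph, hDg, sum_filter, hwU]
  have hW : inflow (QGraph n) (wQ x N) D .W = N + inflow (QGraph n) (wQ x N) D' .W := by
    simp [inflow_QGraph, hDg, hD'g, hDD' _ (uEdge_mem_edgeSet _) (uEdge_ne_gEdge _),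
      hDD' _ (wEdge_mem_edgeSet _) (wEdge_ne_gEdge _)]
  have htotal := sum_inflow (QGraph n) (wQ x N) D
  rw [sum_univ_PVert, sum_wQ, hsum] at htotal
  have hv : ∑ i, x i ≤ ∑ i, inflow (QGraph n) (wQ x N) D (.v i) :=
    sum_le_sum fun i _ => hDlegal (.v i)
  have hUlegal := hDlegal .U
  have hWlegal := hD'legal .W
  simp only [μQ] at hUlegal hWlegal
  exact ⟨_, le_antisymm (by omega) (hU ▸ hUlegal)⟩

theorem exists_sum_eq_of_reconfSeq (hsum : ∑ i, x i = 2 * N) {m : ℕ}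
    {Cs : Fin (m + 1) → Sym2 (PVert n) → PVert n} (h₀ : ConfEq (QGraph n) (Cs 0) C1)
    (hm : ConfEq (QGraph n) (Cs (Fin.last m)) C2)
    (hCs : IsReconfSeq (QGraph n) (wQ x N) (μQ x N) Cs) :
    ∃ S : Finset (Fin n), ∑ i ∈ S, x i = N := by
  obtain ⟨hconf, hstep⟩ := hCs
  obtain ⟨t, hbefore, hafter⟩ := Fin.exists_not_castSucc_and_succ
    (p := fun t => Cs t (gEdge n) = .U) (by simp [h₀ _ gEdge_mem_edgeSet])
    (by simp [hm _ gEdge_mem_edgeSet])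
  have hDg : Cs t.castSucc (gEdge n) = .W := (hconf _).1.gEdge_eq.resolve_left hbefore
  obtain ⟨e, -, -, hothers⟩ := hstep t
  obtain rfl : e = gEdge n := by
    by_contra h
    have := hothers _ gEdge_mem_edgeSet (Ne.symm h)
    simp [hDg, hafter] at this
  exact exists_sum_eq_of_reverse_gEdge x N hsum (hconf _).1 (hconf _).2 (hconf _).2 hDg hafter
    hothers

theorem legal_reversePrefix (hsum : ∑ i, x i = 2 * N) {S : Finset (Fin n)}
    (hS : ∑ i ∈ S, x i = N) {L : List (Sym2 (PVert n))}
    (hLG : ∀ e ∈ (QGraph n).edgeSet, e ∈ L)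
    (huw : ∀ i, L.idxOf (uEdge i) < L.idxOf (wEdge i))
    (hwg : ∀ i ∈ S, L.idxOf (wEdge i) < L.idxOf (gEdge n))
    (hgu : ∀ i ∉ S, L.idxOf (gEdge n) < L.idxOf (uEdge i)) (t : ℕ) :
    Legal (QGraph n) (wQ x N) (μQ x N) (reversePrefix C1 C2 L t) := by
  have hC {e : Sym2 (PVert n)} (he : e ∈ (QGraph n).edgeSet) :=
    reversePrefix_of_mem (A := C1) (B := C2) (hLG e he) t
  have hSc : ∑ i ∈ Sᶜ, x i = N := by
    have := sum_add_sum_compl S x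
    omega
  apply legal_QGraph_of
  · intro i
    rw [hC (uEdge_mem_edgeSet i), hC (wEdge_mem_edgeSet i)]
    by_cases h : L.idxOf (uEdge i) < t
    · simp [h]
    · have := huw i
      simp [show ¬ L.idxOf (wEdge i) < t by omega]
  · rw [hC gEdge_mem_edgeSet]
    by_cases hg : L.idxOf (gEdge n) < t
    · simp [hg]
    · refine .inr (hSc ▸ sum_le_sum_of_subset fun i hi => ?_)
      have := hgu i (mem_compl.1 hi)
      simp [hC (uEdge_mem_edgeSet i), show ¬ L.idxOf (uEdge i) < t by omega]
  · rw [hC gEdge_mem_edgeSet]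
    by_cases hg : L.idxOf (gEdge n) < t
    · refine .inr (hS ▸ sum_le_sum_of_subset fun i hi => ?_)
      have := hwg i hi
      simp [hC (wEdge_mem_edgeSet i), show L.idxOf (wEdge i) < t by omega]
    · simp [hg]

noncomputable def reconfOrder (S : Finset (Fin n)) : List (Sym2 (PVert n)) :=
  S.toList.map uEdge ++ S.toList.map wEdge ++
    gEdge n :: (Sᶜ.toList.map uEdge ++ Sᶜ.toList.map wEdge)

variable (S : Finset (Fin n))

theorem nodup_reconfOrder : (reconfOrder S).Nodup := by
  have hSSc : ∀ a ∈ S, ∀ b ∉ S, a ≠ b := fun _ ha _ hb => ne_of_mem_of_not_mem ha hb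
  simpa [reconfOrder, List.nodup_append, List.nodup_map_iff uEdge_injective,
    List.nodup_map_iff wEdge_injective, nodup_toList, uEdge, wEdge, gEdge, or_imp, forall_and]
    using hSSc

theorem mem_reconfOrder_iff {e : Sym2 (PVert n)} :
    e ∈ reconfOrder S ↔ e ∈ (QGraph n).edgeSet := by
  rw [mem_edgeSet_QGraph]
  simp only [reconfOrder, List.mem_append, List.mem_cons, List.mem_map, mem_toList, mem_compl,
    or_assoc]
  constructor
  · rintro (⟨i, -, rfl⟩ | ⟨i, -, rfl⟩ | rfl | ⟨i, -, rfl⟩ | ⟨i, -, rfl⟩) <;> simp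
  · rintro (rfl | ⟨i, rfl⟩ | ⟨i, rfl⟩)
    · simp
    all_goals by_cases hi : i ∈ S <;> simp [hi, uEdge_injective.eq_iff, wEdge_injective.eq_iff]

theorem idxOf_uEdge_lt_wEdge (i : Fin n) :
    (reconfOrder S).idxOf (uEdge i) < (reconfOrder S).idxOf (wEdge i) := by
  by_cases hi : i ∈ S
  · rw [reconfOrder, List.append_assoc]
    exact List.idxOf_lt_idxOf_append (by simp [uEdge, hi]) (by simp [uEdge, wEdge])
  · rw [reconfOrder, ← List.cons_append, ← List.append_assoc]
    exact List.idxOf_lt_idxOf_append (by simp [uEdge, hi]) (by simp [uEdge, wEdge, gEdge, hi])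

theorem idxOf_wEdge_lt_gEdge {i : Fin n} (hi : i ∈ S) :
    (reconfOrder S).idxOf (wEdge i) < (reconfOrder S).idxOf (gEdge n) :=
  List.idxOf_lt_idxOf_append (by simp [wEdge, hi]) (by simp [uEdge, wEdge, gEdge])

theorem idxOf_gEdge_lt_uEdge {i : Fin n} (hi : i ∉ S) :
    (reconfOrder S).idxOf (gEdge n) < (reconfOrder S).idxOf (uEdge i) := by
  rw [reconfOrder, List.append_cons]
  exact List.idxOf_lt_idxOf_append (by simp) (by simp [uEdge, wEdge, gEdge, hi])

end PartitionGraph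

theorem stmt3_general (n N : ℕ) (x : Fin n → ℕ)
    (hsum : ∑ i, x i = 2 * N) :
    IsConf (QGraph n) (C1 (n := n)) ∧
    Legal (QGraph n) (wQ x N) (μQ x N) (C1 (n := n)) ∧
    IsConf (QGraph n) (C2 (n := n)) ∧
    Legal (QGraph n) (wQ x N) (μQ x N) (C2 (n := n)) ∧
    ((∃ (m : ℕ) (Cs : Fin (m + 1) → Sym2 (PVert n) → PVert n),
        ConfEq (QGraph n) (Cs 0) (C1 (n := n)) ∧
        ConfEq (QGraph n) (Cs (Fin.last m)) (C2 (n := n)) ∧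
        IsReconfSeq (QGraph n) (wQ x N) (μQ x N) Cs ∧
        AtMostOnce (QGraph n) Cs) ↔
      ∃ S : Finset (Fin n), ∑ i ∈ S, x i = N) := by
  refine ⟨isConf_C1, legal_C1 x N hsum, isConf_C2, legal_C2 x N hsum, ?_, ?_⟩
  · rintro ⟨m, Cs, h₀, hm, hCs, -⟩
    exact exists_sum_eq_of_reconfSeq x N hsum h₀ hm hCs
  · rintro ⟨S, hS⟩
    exact exists_reconfSeq_reversePrefix _ _ _ (nodup_reconfOrder S)
      (fun _ => mem_reconfOrder_iff S) isConf_C1 isConf_C2 (fun _ => C1_ne_C2)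
      (legal_reversePrefix x N hsum hS (fun _ => (mem_reconfOrder_iff S).2)
        (idxOf_uEdge_lt_wEdge S) (fun _ => idxOf_wEdge_lt_gEdge S)
        (fun _ => idxOf_gEdge_lt_uEdge S))

theorem stmt3 (n N : ℕ) (x : Fin n → ℕ) (hpos : ∀ i, 0 < x i)
    (hsum : ∑ i, x i = 2 * N) :
    IsConf (QGraph n) (C1 (n := n)) ∧
    Legal (QGraph n) (wQ x N) (μQ x N) (C1 (n := n)) ∧
    IsConf (QGraph n) (C2 (n := n)) ∧
    Legal (QGraph n) (wQ x N) (μQ x N) (C2 (n := n)) ∧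
    ((∃ (m : ℕ) (Cs : Fin (m + 1) → Sym2 (PVert n) → PVert n),
        ConfEq (QGraph n) (Cs 0) (C1 (n := n)) ∧
        ConfEq (QGraph n) (Cs (Fin.last m)) (C2 (n := n)) ∧
        IsReconfSeq (QGraph n) (wQ x N) (μQ x N) Cs ∧
        AtMostOnce (QGraph n) Cs) ↔
      ∃ S : Finset (Fin n), ∑ i ∈ S, x i = N) :=
  stmt3_general n N x hsum
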